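/- arXiv:1502.01461 — 2 statements merged into one kernel-verified Lean document; each statement's English description precedes it below -/
import Mathlib

section
/- For the strings s_h = z y_h z* z x_i z* z x_j z* and s'_h = z x_i z* z x_j z* z y_h z* constructed from an arc e_h = (v_i, v_j) (with z = '01…1' and z* = '1…1' of length p, x_i of length q−1 encoding i in binary with leading '0', y_h of length q encoding 2h in binary with leading '0' and trailing '0', and n−1 = 2p+q), it holds that |overlap(s_h, s'_h)| = 2(n−2) and |overlap(s'_h, s_h)| = n−1. -/
open List

/-- The length of the longest suffix of `s` that is also a prefix of `t`. -/
def ovLen (s t : List Bool) : ℕ :=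
  Nat.findGreatest (fun i => s.drop (s.length - i) = t.take i) (min s.length t.length)

/-- The binary encoding of `i` as a string of length `r` (big-endian, with leading
zeros); `false` represents '0' and `true` represents '1'. -/
def binEnc (r i : ℕ) : List Bool := (List.range r).map fun k => Nat.testBit i (r - 1 - k)

/-- `p = ⌈(n−1)/3⌉`. -/
def pOf (n : ℕ) : ℕ := (n + 1) / 3

/-- `q = n − 1 − 2p`. -/
def qOf (n : ℕ) : ℕ := n - 1 - 2 * pOf n

/-- `z = 01…1` of length `p`. -/
def zStr (n : ℕ) : List Bool := false :: List.replicate (pOf n - 1) true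

/-- `z* = 1…1` of length `p`. -/
def zStar (n : ℕ) : List Bool := List.replicate (pOf n) true

/-- `x_i`: the binary encoding of the vertex index `i` of length `q − 1`. -/
def xEnc (n i : ℕ) : List Bool := binEnc (qOf n - 1) i

/-- `y_h`: the binary encoding of `2h` of length `q` (its last symbol is '0'). -/
def yEnc (n h : ℕ) : List Bool := binEnc (qOf n) (2 * h)

/-- `s_h = z y_h z* z x_i z* z x_j z*` for the arc `e_h = (v_i, v_j)`. -/
def sh (n i j h : ℕ) : List Bool :=
  zStr n ++ yEnc n h ++ zStar n ++ zStr n ++ xEnc n i ++ zStar n ++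
    zStr n ++ xEnc n j ++ zStar n

/-- `s'_h = z x_i z* z x_j z* z y_h z*` for the arc `e_h = (v_i, v_j)`. -/
def sh' (n i j h : ℕ) : List Bool :=
  zStr n ++ xEnc n i ++ zStar n ++ zStr n ++ xEnc n j ++ zStar n ++
    zStr n ++ yEnc n h ++ zStar n

/-! ### Auxiliary lemmas -/

lemma seg_eval {α} (A B C : List α) (k a : ℕ) (ha : A.length = a)
    (h1 : a ≤ k) (h2 : k - a < B.length) :
    (A ++ (B ++ C))[k]? = B[k - a]? := by
  subst ha
  rw [List.getElem?_append_right h1, List.getElem?_append]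
  simp [h2]

lemma seg_eval0 {α} (B C : List α) (k b : ℕ) (hb : B.length = b) (h2 : k < b) :
    (B ++ C)[k]? = B[k]? := by
  subst hb; rw [List.getElem?_append]; simp [h2]

lemma pow_gap : ∀ q : ℕ, 19 ≤ q → 2*(3*q+5)^2 < 2^(q-1) := by
  intro q hq
  induction q, hq using Nat.le_induction with
  | base => norm_num
  | succ n hn ih =>
    have h2 : n - 1 + 1 = n := by omega
    have hc : 2*(3*(n+1)+5)^2 ≤ 2*(2*(3*n+5)^2) := by nlinarith
    have hd : 2*(2*(3*n+5)^2) < 2*2^(n-1) := by linarith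
    have he : 2*2^(n-1) = 2^n := by rw [← pow_succ', h2]
    have : n + 1 - 1 = n := by omega
    rw [this]
    omega

lemma binEnc_get (r m k : ℕ) (hk : k < r) :
    (binEnc r m)[k]? = some (Nat.testBit m (r - 1 - k)) := by
  simp [binEnc, List.getElem?_map, List.getElem?_range hk]

lemma binEnc_len (r m : ℕ) : (binEnc r m).length = r := by simp [binEnc]

theorem overlap_aux (p q : ℕ) (hq : 20 ≤ q) (hpq : q ≤ p)
    (z t x1 x2 y Sa Sb : List Bool)
    (hz : z = false :: List.replicate (p - 1) true)
    (ht : t = List.replicate p true)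
    (hx1len : x1.length = q - 1) (hx2len : x2.length = q - 1) (hylen : y.length = q)
    (hx10 : x1[0]? = some false)
    (hy0 : y[0]? = some false) (hyq : y[q - 1]? = some false)
    (hSa : Sa = z ++ y ++ t ++ z ++ x1 ++ t ++ z ++ x2 ++ t)
    (hSb : Sb = z ++ x1 ++ t ++ z ++ x2 ++ t ++ z ++ y ++ t) :
    ovLen Sa Sb = 4 * p + 2 * q - 2 ∧ ovLen Sb Sa = 2 * p + q := by
  have hp : 20 ≤ p := le_trans hq hpq
  have hzlen : z.length = p := by rw [hz]; simp; omega
  have htlen : t.length = p := by rw [ht]; simp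
  have hz0 : z[0]? = some false := by rw [hz]; simp
  have hzk : ∀ k, 1 ≤ k → k < p → z[k]? = some true := by
    intro k h1 h2
    obtain ⟨m, rfl⟩ : ∃ m, k = m + 1 := ⟨k - 1, by omega⟩
    rw [hz]
    simp [List.getElem?_replicate]
    omega
  have htk : ∀ k, k < p → t[k]? = some true := by
    intro k h2; rw [ht]; simp [List.getElem?_replicate]; omega
  have lenA : Sa.length = 6*p+3*q-2 := by
    rw [hSa]; simp [hzlen, htlen, hx1len, hx2len, hylen]; omega
  have lenB : Sb.length = 6*p+3*q-2 := by
    rw [hSb]; simp [hzlen, htlen, hx1len, hx2len, hylen]; omega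
  -- region lemmas for Sa
  have Sa_z : ∀ k, k < p → Sa[k]? = z[k]? := by
    intro k hk
    have e : Sa = z ++ (y ++ t ++ z ++ x1 ++ t ++ z ++ x2 ++ t) := by
      rw [hSa]; simp [List.append_assoc]
    rw [e, seg_eval0 z _ k p hzlen hk]
  have Sa_y : ∀ k, p ≤ k → k < p + q → Sa[k]? = y[k - p]? := by
    intro k h1 h2
    have e : Sa = z ++ (y ++ (t ++ z ++ x1 ++ t ++ z ++ x2 ++ t)) := by
      rw [hSa]; simp [List.append_assoc]
    rw [e, seg_eval z y _ k p hzlen h1 (by rw [hylen]; omega)]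
  have Sa_t : ∀ k, p + q ≤ k → k < 2*p + q → Sa[k]? = some true := by
    intro k h1 h2
    have e : Sa = (z ++ y) ++ (t ++ (z ++ x1 ++ t ++ z ++ x2 ++ t)) := by
      rw [hSa]; simp [List.append_assoc]
    have hA : (z ++ y).length = p + q := by simp [hzlen, hylen]
    rw [e, seg_eval _ t _ k (p+q) hA h1 (by rw [htlen]; omega)]
    exact htk _ (by omega)
  -- region lemmas for Sb
  have Sb_z : ∀ k, k < p → Sb[k]? = z[k]? := by
    intro k hk
    have e : Sb = z ++ (x1 ++ t ++ z ++ x2 ++ t ++ z ++ y ++ t) := by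
      rw [hSb]; simp [List.append_assoc]
    rw [e, seg_eval0 z _ k p hzlen hk]
  have Sb_x1 : ∀ k, p ≤ k → k < p + q - 1 → Sb[k]? = x1[k - p]? := by
    intro k h1 h2
    have e : Sb = z ++ (x1 ++ (t ++ z ++ x2 ++ t ++ z ++ y ++ t)) := by
      rw [hSb]; simp [List.append_assoc]
    rw [e, seg_eval z x1 _ k p hzlen h1 (by rw [hx1len]; omega)]
  have Sb_t1 : ∀ k, p + q - 1 ≤ k → k < 2*p + q - 1 → Sb[k]? = some true := by
    intro k h1 h2
    have e : Sb = (z ++ x1) ++ (t ++ (z ++ x2 ++ t ++ z ++ y ++ t)) := by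
      rw [hSb]; simp [List.append_assoc]
    have hA : (z ++ x1).length = p + q - 1 := by simp [hzlen, hx1len]; omega
    rw [e, seg_eval _ t _ k (p+q-1) hA h1 (by rw [htlen]; omega)]
    exact htk _ (by omega)
  have Sb_z2 : ∀ k, 2*p + q - 1 ≤ k → k < 3*p + q - 1 → Sb[k]? = z[k - (2*p+q-1)]? := by
    intro k h1 h2
    have e : Sb = (z ++ x1 ++ t) ++ (z ++ (x2 ++ t ++ z ++ y ++ t)) := by
      rw [hSb]; simp [List.append_assoc]
    have hA : (z ++ x1 ++ t).length = 2*p + q - 1 := by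
      simp [hzlen, hx1len, htlen]; omega
    rw [e, seg_eval _ z _ k (2*p+q-1) hA h1 (by rw [hzlen]; omega)]
  have Sb_t2 : ∀ k, 3*p + 2*q - 2 ≤ k → k < 4*p + 2*q - 2 → Sb[k]? = some true := by
    intro k h1 h2
    have e : Sb = (z ++ x1 ++ t ++ z ++ x2) ++ (t ++ (z ++ y ++ t)) := by
      rw [hSb]; simp [List.append_assoc]
    have hA : (z ++ x1 ++ t ++ z ++ x2).length = 3*p + 2*q - 2 := by
      simp [hzlen, hx1len, hx2len, htlen]; omega
    rw [e, seg_eval _ t _ k (3*p+2*q-2) hA h1 (by rw [htlen]; omega)]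
    exact htk _ (by omega)
  -- specific values
  have vSa0 : Sa[0]? = some false := by rw [Sa_z 0 (by omega), hz0]
  have vSap : Sa[p]? = some false := by
    rw [Sa_y p le_rfl (by omega), Nat.sub_self]; exact hy0
  have vSapq : Sa[p+q-1]? = some false := by
    rw [Sa_y _ (by omega) (by omega)]
    have e : p+q-1-p = q-1 := by omega
    rw [e]; exact hyq
  have vSa2pq : Sa[2*p+q-1]? = some true := Sa_t _ (by omega) (by omega)
  have vSb0 : Sb[0]? = some false := by rw [Sb_z 0 (by omega), hz0]
  have vSbp : Sb[p]? = some false := by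
    rw [Sb_x1 p le_rfl (by omega), Nat.sub_self]; exact hx10
  have vSbpq : Sb[p+q-1]? = some true := Sb_t1 _ le_rfl (by omega)
  -- structural decompositions for drop/take
  have e1 : Sa = (z ++ y ++ t) ++ (z ++ x1 ++ t ++ z ++ x2 ++ t) := by
    rw [hSa]; simp [List.append_assoc]
  have e2 : Sb = (z ++ x1 ++ t ++ z ++ x2 ++ t) ++ (z ++ y ++ t) := by
    rw [hSb]; simp [List.append_assoc]
  have hlen1 : (z ++ y ++ t).length = 2*p+q := by simp [hzlen, hylen, htlen]; omega
  have hlen2 : (z ++ x1 ++ t ++ z ++ x2 ++ t).length = 4*p+2*q-2 := by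
    simp [hzlen, hx1len, hx2len, htlen]; omega
  constructor
  · -- ovLen Sa Sb = 4p+2q-2
    unfold ovLen
    rw [lenA, lenB, min_self, Nat.findGreatest_eq_iff]
    refine ⟨by omega, fun _ => ?_, fun L hL1 hL2 hP => ?_⟩
    · show Sa.drop (6*p+3*q-2 - (4*p+2*q-2)) = Sb.take (4*p+2*q-2)
      have h1 : 6*p+3*q-2 - (4*p+2*q-2) = 2*p+q := by omega
      rw [h1, e1, e2, List.drop_left' hlen1, List.take_left' hlen2]
    · have hP' : Sa.drop (6*p+3*q-2 - L) = Sb.take L := hP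
      have key : ∀ m, m < L → Sa[(6*p+3*q-2 - L) + m]? = Sb[m]? := by
        intro m hm
        have h1 : (Sa.drop (6*p+3*q-2 - L))[m]? = (Sb.take L)[m]? := by rw [hP']
        rwa [List.getElem?_drop, List.getElem?_take, if_pos hm] at h1
      obtain ⟨k, hkdef⟩ : ∃ k, 6*p+3*q-2 - L = k := ⟨_, rfl⟩
      rw [hkdef] at key
      have hcase : k = 0 ∨ (1 ≤ k ∧ k < p) ∨ (p ≤ k ∧ k ≤ p+q-2) ∨ k = p+q-1 ∨
          (p+q ≤ k ∧ k ≤ 2*p+q-1) := by omega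
      rcases hcase with rfl | ⟨h1, h2⟩ | ⟨h1, h2⟩ | rfl | ⟨h1, h2⟩
      · have h3 := key (p+q-1) (by omega)
        rw [Nat.zero_add, vSapq, vSbpq] at h3
        simp at h3
      · have h3 := key 0 (by omega)
        rw [Nat.add_zero, Sa_z k h2, hzk k h1 h2, vSb0] at h3
        simp at h3
      · have h3 := key (p+q-1-k) (by omega)
        have hidx : k + (p+q-1-k) = p+q-1 := by omega
        rw [hidx, vSapq, Sb_z _ (by omega), hzk _ (by omega) (by omega)] at h3
        simp at h3
      · have h3 := key p (by omega)
        have hidx : p+q-1 + p = 2*p+q-1 := by omega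
        rw [hidx, vSa2pq, vSbp] at h3
        simp at h3
      · have h3 := key 0 (by omega)
        rw [Nat.add_zero, Sa_t k h1 (by omega), vSb0] at h3
        simp at h3
  · -- ovLen Sb Sa = 2p+q
    unfold ovLen
    rw [lenA, lenB, min_self, Nat.findGreatest_eq_iff]
    refine ⟨by omega, fun _ => ?_, fun L hL1 hL2 hP => ?_⟩
    · show Sb.drop (6*p+3*q-2 - (2*p+q)) = Sa.take (2*p+q)
      have h1 : 6*p+3*q-2 - (2*p+q) = 4*p+2*q-2 := by omega
      rw [h1, e1, e2, List.drop_left' hlen2, List.take_left' hlen1]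
    · have hP' : Sb.drop (6*p+3*q-2 - L) = Sa.take L := hP
      have key : ∀ m, m < L → Sb[(6*p+3*q-2 - L) + m]? = Sa[m]? := by
        intro m hm
        have h1 : (Sb.drop (6*p+3*q-2 - L))[m]? = (Sa.take L)[m]? := by rw [hP']
        rwa [List.getElem?_drop, List.getElem?_take, if_pos hm] at h1
      obtain ⟨k, hkdef⟩ : ∃ k, 6*p+3*q-2 - L = k := ⟨_, rfl⟩
      rw [hkdef] at key
      have hcase : k = 0 ∨ (1 ≤ k ∧ k < p) ∨ (p ≤ k ∧ k ≤ p+q-2) ∨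
          (p+q-1 ≤ k ∧ k ≤ 2*p+q-2) ∨ k = 2*p+q-1 ∨ (2*p+q ≤ k ∧ k ≤ 3*p+q-2) ∨
          (3*p+q-1 ≤ k ∧ k ≤ 3*p+2*q-3) ∨ (3*p+2*q-2 ≤ k ∧ k ≤ 4*p+2*q-3) := by omega
      rcases hcase with rfl | ⟨h1, h2⟩ | ⟨h1, h2⟩ | ⟨h1, h2⟩ | rfl | ⟨h1, h2⟩ | ⟨h1, h2⟩ | ⟨h1, h2⟩
      · have h3 := key (p+q-1) (by omega)
        rw [Nat.zero_add, vSbpq, vSapq] at h3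
        simp at h3
      · have h3 := key 0 (by omega)
        rw [Nat.add_zero, Sb_z k h2, hzk k h1 h2, vSa0] at h3
        simp at h3
      · have h3 := key p (by omega)
        rw [Sb_t1 (k+p) (by omega) (by omega), vSap] at h3
        simp at h3
      · have h3 := key 0 (by omega)
        rw [Nat.add_zero, Sb_t1 k h1 (by omega), vSa0] at h3
        simp at h3
      · have h3 := key (p+q-1) (by omega)
        have hidx : 2*p+q-1 + (p+q-1) = 3*p+2*q-2 := by omega
        rw [hidx, Sb_t2 _ le_rfl (by omega), vSapq] at h3
        simp at h3
      · have h3 := key 0 (by omega)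
        rw [Nat.add_zero, Sb_z2 k (by omega) (by omega),
            hzk _ (by omega) (by omega), vSa0] at h3
        simp at h3
      · have h3 := key p (by omega)
        rw [Sb_t2 (k+p) (by omega) (by omega), vSap] at h3
        simp at h3
      · have h3 := key 0 (by omega)
        rw [Nat.add_zero, Sb_t2 k h1 (by omega), vSa0] at h3
        simp at h3

/-- |overlap(s_h, s'_h)| = 2(n−2) and |overlap(s'_h, s_h)| = n−1. -/
theorem overlap_sh_sh' (n i j h : ℕ) (hn : 64 ≤ n)
    (hi1 : 1 ≤ i) (hi2 : i ≤ n) (hj1 : 1 ≤ j) (hj2 : j ≤ n) (hij : i ≠ j)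
    (hh1 : 1 ≤ h) (hh2 : h ≤ n ^ 2) :
    ovLen (sh n i j h) (sh' n i j h) = 2 * (n - 2) ∧
      ovLen (sh' n i j h) (sh n i j h) = n - 1 := by
  have hqq : 20 ≤ qOf n ∧ qOf n ≤ pOf n ∧ 2 * pOf n + qOf n = n - 1 ∧ n ≤ 3 * qOf n + 5 := by
    unfold qOf pOf; omega
  obtain ⟨hq20, hpq, h2pq, hn35⟩ := hqq
  have hpow := pow_gap (qOf n) (by omega)
  have hsplit : 2^(qOf n - 1) = 2 * 2^(qOf n - 2) := by
    rw [← pow_succ']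
    congr 1
    omega
  have h1 : 2*(3*qOf n+5)^2 < 2 * 2^(qOf n - 2) := by rw [← hsplit]; exact hpow
  have h2 : (3*qOf n+5)^2 < 2^(qOf n - 2) := by linarith
  have hX : 3*qOf n + 5 ≤ (3*qOf n+5)^2 := Nat.le_self_pow (by norm_num) _
  have hi2' : i < 2^(qOf n - 2) := lt_of_le_of_lt (by omega) (lt_of_le_of_lt hX h2)
  have hj2' : j < 2^(qOf n - 2) := lt_of_le_of_lt (by omega) (lt_of_le_of_lt hX h2)
  have hn2 : n^2 ≤ (3*qOf n+5)^2 := Nat.pow_le_pow_left (by omega) 2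
  have hh2' : 2*h < 2^(qOf n - 1) := lt_of_le_of_lt (by linarith) hpow
  have hx10 : (binEnc (qOf n - 1) i)[0]? = some false := by
    rw [binEnc_get _ _ _ (by omega)]
    have e : qOf n - 1 - 1 - 0 = qOf n - 2 := by omega
    rw [e, Nat.testBit_lt_two_pow hi2']
  have hy0 : (binEnc (qOf n) (2*h))[0]? = some false := by
    rw [binEnc_get _ _ _ (by omega)]
    have e : qOf n - 1 - 0 = qOf n - 1 := by omega
    rw [e, Nat.testBit_lt_two_pow hh2']
  have hyq : (binEnc (qOf n) (2*h))[qOf n - 1]? = some false := by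
    rw [binEnc_get _ _ _ (by omega)]
    have e : qOf n - 1 - (qOf n - 1) = 0 := by omega
    rw [e]
    simp [Nat.testBit_zero]
  obtain ⟨H1, H2⟩ := overlap_aux (pOf n) (qOf n) hq20 hpq
    (zStr n) (zStar n) (xEnc n i) (xEnc n j) (yEnc n h)
    (sh n i j h) (sh' n i j h) rfl rfl
    (binEnc_len _ _) (binEnc_len _ _) (binEnc_len _ _)
    hx10 hy0 hyq rfl rfl
  constructor
  · rw [H1]; omega
  · rw [H2]; omega
end

section
/- In the construction of Theorem 4, the matching M = {{s_h, s'_h} : 1 ≤ h ≤ m} is a maximum weight matching in the overlap graph G(S), and μ(S) = 2(n−2)m. -/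
open List

/-- The weight of a pair of positions of `S` in the overlap graph `G(S)`. -/
def pairWeight (S : List (List Bool)) (p : ℕ × ℕ) : ℕ :=
  max (ovLen (S.getD p.1 []) (S.getD p.2 [])) (ovLen (S.getD p.2 []) (S.getD p.1 []))

/-- A matching in the overlap graph `G(S)`: a set of pairs of positions of `S` with
pairwise distinct endpoints. -/
def IsMatching (S : List (List Bool)) (M : Finset (ℕ × ℕ)) : Prop :=
  (∀ p ∈ M, p.1 < p.2 ∧ p.2 < S.length) ∧
    ∀ p ∈ M, ∀ q ∈ M, p ≠ q → p.1 ≠ q.1 ∧ p.1 ≠ q.2 ∧ p.2 ≠ q.1 ∧ p.2 ≠ q.2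

/-- `mu S` is the maximum weight of a matching in the overlap graph `G(S)`. -/
noncomputable def mu (S : List (List Bool)) : ℕ :=
  sSup { t | ∃ M : Finset (ℕ × ℕ), IsMatching S M ∧ t = ∑ p ∈ M, pairWeight S p }

/-- The collection S = {s_h, s'_h : 1 ≤ h ≤ m} constructed from the arcs
E 0, …, E (m−1) of a directed graph on n vertices. -/
def Sconstr (n m : ℕ) (E : ℕ → ℕ × ℕ) : List (List Bool) :=
  (List.range m).flatMap fun h =>
    [sh n (E h).1 (E h).2 (h + 1), sh' n (E h).1 (E h).2 (h + 1)]

/-- The matching M = {{s_h, s'_h} : 1 ≤ h ≤ m} (as pairs of positions in Sconstr). -/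
def Mconstr (m : ℕ) : Finset (ℕ × ℕ) :=
  (Finset.range m).image fun h => (2 * h, 2 * h + 1)

/-! Every string of `S` has length `3n - 5` and is made of three blocks `z w z*`, where
`z = 01⋯1` and `z* = 1⋯1` have length `p` and the windows `w` are `y_h`, `x_i`, `x_j`; the
blocks have length `n - 1` (window `y_h`) or `n - 2` (window `x_i`). An overlap longer than
`2(n - 2)` shifts one string against another by `0 < d ≤ n - 2`. The only zeros outside the
windows are the first symbols of the blocks, so the zeros starting the blocks of the second
string force `d` into the first window of the first one, and then force its second and third
windows to carry the same single zero. This is impossible, since `x_i ≠ x_j` and `y_h` ends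
with `0`. Hence every edge of `G(S)` weighs at most `2(n - 2)`, the edges `{s_h, s'_h}` weigh
exactly that, and a matching has at most `m` edges. -/

theorem ovLen_le {s t : List Bool} {B : ℕ}
    (h : ∀ l, B < l → l ≤ min s.length t.length → s.drop (s.length - l) ≠ t.take l) :
    ovLen s t ≤ B := by
  by_contra! hc
  exact h _ hc (Nat.findGreatest_le _) (Nat.findGreatest_spec
    (P := fun i => s.drop (s.length - i) = t.take i) (Nat.zero_le _) (by simp))

theorem le_ovLen {s t : List Bool} {l : ℕ} (hl : l ≤ min s.length t.length)
    (h : s.drop (s.length - l) = t.take l) : l ≤ ovLen s t :=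
  Nat.le_findGreatest hl h

theorem length_le_ovLen_append (a b c : List Bool) : b.length ≤ ovLen (a ++ b) (b ++ c) :=
  le_ovLen (by simp) (by simp)

theorem getElem?_add_of_drop_prefix {α : Type*} {s t : List α} {d j : ℕ} (h : s.drop d <+: t)
    (hj : d + j < s.length) : s[d + j]? = t[j]? := by
  obtain ⟨r, hr⟩ := h
  rw [← getElem?_drop, ← hr, getElem?_append_left (by rw [length_drop]; omega)]

theorem IsMatching.two_mul_card_le {S : List (List Bool)} {M : Finset (ℕ × ℕ)}
    (hM : IsMatching S M) : 2 * M.card ≤ S.length := by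
  classical
  have hfst : Set.InjOn Prod.fst M := fun a ha b hb hab =>
    by_contra fun hne => (hM.2 a ha b hb hne).1 hab
  have hsnd : Set.InjOn Prod.snd M := fun a ha b hb hab =>
    by_contra fun hne => (hM.2 a ha b hb hne).2.2.2 hab
  have hdisj : Disjoint (M.image Prod.fst) (M.image Prod.snd) := by
    simp only [Finset.disjoint_left, Finset.mem_image, not_exists, not_and]
    rintro _ ⟨a, ha, rfl⟩ b hb hba
    by_cases hab : b = a
    · exact (hM.1 a ha).1.ne (hab ▸ hba).symm
    · exact (hM.2 b hb a ha hab).2.2.1 hba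
  calc 2 * M.card = (M.image Prod.fst ∪ M.image Prod.snd).card := by
        rw [Finset.card_union_of_disjoint hdisj, Finset.card_image_of_injOn hfst,
          Finset.card_image_of_injOn hsnd, two_mul]
    _ ≤ (Finset.range S.length).card := by
        refine Finset.card_le_card fun k hk => ?_
        simp only [Finset.mem_union, Finset.mem_image, Finset.mem_range] at hk ⊢
        rcases hk with ⟨a, ha, rfl⟩ | ⟨a, ha, rfl⟩ <;> have := hM.1 a ha <;> omega
    _ = S.length := Finset.card_range _

theorem IsMatching.two_mul_sum_pairWeight_le {S : List (List Bool)} {M : Finset (ℕ × ℕ)}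
    (hM : IsMatching S M) {B : ℕ}
    (hB : ∀ i < S.length, ∀ j < S.length, i ≠ j → ovLen (S.getD i []) (S.getD j []) ≤ B) :
    2 * ∑ p ∈ M, pairWeight S p ≤ S.length * B := by
  have hle : ∑ p ∈ M, pairWeight S p ≤ M.card * B := by
    refine Finset.sum_le_card_nsmul _ _ _ fun p hp => ?_
    obtain ⟨h12, h2⟩ := hM.1 p hp
    exact max_le (hB _ (by omega) _ h2 h12.ne) (hB _ h2 _ (by omega) h12.ne')
  calc 2 * ∑ p ∈ M, pairWeight S p ≤ 2 * M.card * B := by rw [mul_assoc]; gcongr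
    _ ≤ S.length * B := by gcongr; exact hM.two_mul_card_le

theorem mu_eq_of_forall_le {S : List (List Bool)} {M : Finset (ℕ × ℕ)} (hM : IsMatching S M)
    (hmax : ∀ M', IsMatching S M' → ∑ p ∈ M', pairWeight S p ≤ ∑ p ∈ M, pairWeight S p) :
    mu S = ∑ p ∈ M, pairWeight S p :=
  IsGreatest.csSup_eq ⟨⟨M, hM, rfl⟩, by rintro _ ⟨M', hM', rfl⟩; exact hmax M' hM'⟩

theorem isMatching_Mconstr {S : List (List Bool)} {m : ℕ} (hS : 2 * m ≤ S.length) :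
    IsMatching S (Mconstr m) := by
  simp only [IsMatching, Mconstr, Finset.mem_image, Finset.mem_range]
  refine ⟨?_, ?_⟩
  · rintro _ ⟨h, hh, rfl⟩
    exact ⟨by omega, by omega⟩
  · rintro _ ⟨a, -, rfl⟩ _ ⟨b, -, rfl⟩ hne
    have : a ≠ b := by rintro rfl; exact hne rfl
    omega

def block (p : ℕ) (w : List Bool) : List Bool :=
  (false :: replicate (p - 1) true) ++ w ++ replicate p true

def block3 (p : ℕ) (w₁ w₂ w₃ : List Bool) : List Bool :=
  block p w₁ ++ block p w₂ ++ block p w₃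

/-- With `aᵢ = |wᵢ|`, the positions of `block3 p w₁ w₂ w₃` that may hold `false`. -/
def MaybeFalse (p a₁ a₂ a₃ k : ℕ) : Prop :=
  k = 0 ∨ (p ≤ k ∧ k < p + a₁) ∨ k = 2 * p + a₁ ∨ (3 * p + a₁ ≤ k ∧ k < 3 * p + a₁ + a₂) ∨
    k = 4 * p + a₁ + a₂ ∨ (5 * p + a₁ + a₂ ≤ k ∧ k < 5 * p + a₁ + a₂ + a₃)

section Block

variable {p : ℕ} {w w₁ w₂ w₃ : List Bool} {k t : ℕ}

theorem block_length (hp : 0 < p) : (block p w).length = 2 * p + w.length := by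
  rw [block]; simp only [length_cons, length_append, length_replicate]; omega

theorem getElem?_block_zero : (block p w)[0]? = some false := by
  simp [block]

theorem getElem?_block_add (hp : 0 < p) (ht : t < w.length) : (block p w)[p + t]? = w[t]? := by
  have hz : (false :: replicate (p - 1) true).length = p := by
    rw [length_cons, length_replicate]; omega
  rw [block, getElem?_append_left (by rw [length_append, hz]; omega),
    getElem?_append_right (by omega), hz, Nat.add_sub_cancel_left]

theorem getElem?_block_eq_true (hp : 0 < p) (hk : k < 2 * p + w.length) (h0 : k ≠ 0)
    (hw : ¬(p ≤ k ∧ k < p + w.length)) : (block p w)[k]? = some true := by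
  have hz : (false :: replicate (p - 1) true).length = p := by
    rw [length_cons, length_replicate]; omega
  rw [block]
  rcases Nat.lt_or_ge k p with hkp | hkp
  · rw [getElem?_append_left (by rw [length_append, hz]; omega),
      getElem?_append_left (by omega)]
    obtain ⟨k, rfl⟩ := Nat.exists_eq_add_of_lt (Nat.pos_of_ne_zero h0)
    rw [zero_add, getElem?_cons_succ, getElem?_replicate, if_pos (by omega)]
  · rw [getElem?_append_right (by rw [length_append, hz]; omega), getElem?_replicate,
      if_pos (by rw [length_append, hz]; omega)]

theorem block_injective : Function.Injective (block p) := fun _ _ h => by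
  simpa [block] using h

theorem block3_length (hp : 0 < p) :
    (block3 p w₁ w₂ w₃).length = 6 * p + w₁.length + w₂.length + w₃.length := by
  simp only [block3, length_append, block_length hp]; omega

theorem getElem?_block3 (hp : 0 < p) : (block3 p w₁ w₂ w₃)[k]? =
    if k < 2 * p + w₁.length then (block p w₁)[k]?
    else if k < 4 * p + w₁.length + w₂.length then (block p w₂)[k - (2 * p + w₁.length)]?
    else (block p w₃)[k - (4 * p + w₁.length + w₂.length)]? := by
  have h₁ := block_length hp (w := w₁)
  have h₂ := block_length hp (w := w₂)
  simp only [block3, getElem?_append, length_append, h₁, h₂]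
  split_ifs <;> first | rfl | omega | (congr 1; omega)

theorem getElem?_block3_eq_true (hp : 0 < p) (hk : k < (block3 p w₁ w₂ w₃).length)
    (h : ¬MaybeFalse p w₁.length w₂.length w₃.length k) : (block3 p w₁ w₂ w₃)[k]? = some true := by
  rw [block3_length hp] at hk
  unfold MaybeFalse at h
  rw [getElem?_block3 hp]
  split_ifs <;> exact getElem?_block_eq_true hp (by omega) (by omega) (by omega)

theorem maybeFalse_of_getElem?_block3 (hp : 0 < p) (h : (block3 p w₁ w₂ w₃)[k]? = some false) :
    MaybeFalse p w₁.length w₂.length w₃.length k := by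
  by_contra hk
  have hlt : k < (block3 p w₁ w₂ w₃).length := by
    by_contra! hge; rw [getElem?_eq_none hge] at h; cases h
  rw [getElem?_block3_eq_true hp hlt hk] at h
  cases h

theorem getElem?_block3_eq_false (hp : 0 < p)
    (hk : k = 0 ∨ k = 2 * p + w₁.length ∨ k = 4 * p + w₁.length + w₂.length) :
    (block3 p w₁ w₂ w₃)[k]? = some false := by
  rw [getElem?_block3 hp]
  rcases hk with rfl | rfl | rfl
  · rw [if_pos (by omega), getElem?_block_zero]
  · rw [if_neg (by omega), if_pos (by omega), Nat.sub_self, getElem?_block_zero]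
  · rw [if_neg (by omega), if_neg (by omega), Nat.sub_self, getElem?_block_zero]

theorem getElem?_block3_add₂ (hp : 0 < p) (ht : t < w₂.length) :
    (block3 p w₁ w₂ w₃)[3 * p + w₁.length + t]? = w₂[t]? := by
  rw [getElem?_block3 hp, if_neg (by omega), if_pos (by omega), ← getElem?_block_add hp ht]
  congr 1; omega

theorem getElem?_block3_add₃ (hp : 0 < p) (ht : t < w₃.length) :
    (block3 p w₁ w₂ w₃)[5 * p + w₁.length + w₂.length + t]? = w₃[t]? := by
  rw [getElem?_block3 hp, if_neg (by omega), if_neg (by omega), ← getElem?_block_add hp ht]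
  congr 1; omega

theorem block3_injective {u₁ u₂ u₃ v₁ v₂ v₃ : List Bool} (h₁ : u₁.length = v₁.length)
    (h₂ : u₂.length = v₂.length) (h : block3 p u₁ u₂ u₃ = block3 p v₁ v₂ v₃) :
    u₁ = v₁ ∧ u₂ = v₂ ∧ u₃ = v₃ := by
  obtain ⟨h₁₂, h₃⟩ := append_inj h (by simp [block, h₁, h₂])
  obtain ⟨e₁, e₂⟩ := append_inj h₁₂ (by simp [block, h₁])
  exact ⟨block_injective e₁, block_injective e₂, block_injective h₃⟩

end Block

def WindowLengths (q : ℕ) (w₁ w₂ w₃ : List Bool) : Prop :=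
  w₂.length = q - 1 ∧ (w₁.length = q ∧ w₃.length = q - 1 ∨ w₁.length = q - 1 ∧ w₃.length = q)

section Shift

variable {p q d : ℕ} {u₁ u₂ u₃ v₁ v₂ v₃ : List Bool}

/-- As `d < 2p + q`, the zeros starting the blocks of `v` can only face the first window of `u`
(for the first block) and then one and the same offset `f` of `u₂` and `u₃`. -/
theorem exists_offset_of_drop_prefix (hq : 2 ≤ q) (hqp : q ≤ p) (hu : WindowLengths q u₁ u₂ u₃)
    (hv : WindowLengths q v₁ v₂ v₃) (hd₀ : 0 < d) (hd : d ≤ 2 * p + q - 1)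
    (hpre : (block3 p u₁ u₂ u₃).drop d <+: block3 p v₁ v₂ v₃) :
    ∃ f < q - 1, d + (2 * p + v₁.length) = 3 * p + u₁.length + f ∧
      d + (4 * p + v₁.length + v₂.length) = 5 * p + u₁.length + u₂.length + f := by
  have hp : 0 < p := by omega
  obtain ⟨hu₂, hu₁₃⟩ := hu
  obtain ⟨hv₂, hv₁₃⟩ := hv
  have hlen : (block3 p u₁ u₂ u₃).length = 6 * p + 3 * q - 2 := by
    rw [block3_length hp]; omega
  have start : ∀ j, j = 0 ∨ j = 2 * p + v₁.length ∨ j = 4 * p + v₁.length + v₂.length →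
      d + j < 6 * p + 3 * q - 2 → MaybeFalse p u₁.length u₂.length u₃.length (d + j) :=
    fun j hj hjL => maybeFalse_of_getElem?_block3 hp <| by
      rw [getElem?_add_of_drop_prefix hpre (by omega), getElem?_block3_eq_false hp hj]
  have s₀ := start _ (Or.inl rfl)
  have s₁ := start _ (Or.inr (Or.inl rfl))
  have s₂ := start _ (Or.inr (Or.inr rfl))
  unfold MaybeFalse at s₀ s₁ s₂
  have : 3 * p + u₁.length ≤ d + (2 * p + v₁.length) ∧
      d + (2 * p + v₁.length) < 3 * p + u₁.length + u₂.length := by omega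
  exact ⟨d + (2 * p + v₁.length) - (3 * p + u₁.length), by omega, by omega, by omega⟩

/-- Away from `f`, the windows `u₂` and `u₃` face the ones around a block start of `v`. -/
theorem exists_indicator_of_drop_prefix (hq : 2 ≤ q) (hqp : q ≤ p)
    (hu : WindowLengths q u₁ u₂ u₃) (hv : WindowLengths q v₁ v₂ v₃) (hd₀ : 0 < d)
    (hd : d ≤ 2 * p + q - 1) (hpre : (block3 p u₁ u₂ u₃).drop d <+: block3 p v₁ v₂ v₃) :
    ∃ f < q - 1, (∀ t < u₂.length, u₂[t]? = some (t != f)) ∧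
      ∀ t < u₃.length, u₃[t]? = some (t != f) := by
  obtain ⟨f, hf, hf₂, hf₃⟩ := exists_offset_of_drop_prefix hq hqp hu hv hd₀ hd hpre
  have hp : 0 < p := by omega
  obtain ⟨hu₂, hu₁₃⟩ := hu
  obtain ⟨hv₂, hv₁₃⟩ := hv
  have hlen : (block3 p u₁ u₂ u₃).length = 6 * p + 3 * q - 2 := by
    rw [block3_length hp]; omega
  have hvlen : (block3 p v₁ v₂ v₃).length = 6 * p + 3 * q - 2 := by
    rw [block3_length hp]; omega
  have agree : ∀ j, d + j < 6 * p + 3 * q - 2 →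
      (block3 p u₁ u₂ u₃)[d + j]? = (block3 p v₁ v₂ v₃)[j]? := fun j hj =>
    getElem?_add_of_drop_prefix hpre (by omega)
  refine ⟨f, hf, fun t ht => ?_, fun t ht => ?_⟩
  · rw [← getElem?_block3_add₂ hp ht (w₁ := u₁) (w₃ := u₃)]
    rcases eq_or_ne t f with rfl | htf
    · rw [← hf₂, agree _ (by omega), getElem?_block3_eq_false hp (by omega)]
      simp
    · rw [show 3 * p + u₁.length + t = d + (2 * p + v₁.length + t - f) by omega, agree _ (by omega),
        getElem?_block3_eq_true hp (by omega) (by unfold MaybeFalse; omega)]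
      simp [htf]
  · rw [← getElem?_block3_add₃ hp ht (w₁ := u₁) (w₂ := u₂)]
    rcases eq_or_ne t f with rfl | htf
    · rw [← hf₃, agree _ (by omega), getElem?_block3_eq_false hp (by omega)]
      simp
    · rw [show 5 * p + u₁.length + u₂.length + t = d + (4 * p + v₁.length + v₂.length + t - f) by
          omega, agree _ (by omega),
        getElem?_block3_eq_true hp (by omega) (by unfold MaybeFalse; omega)]
      simp [htf]

end Shift

/-- The shapes of `s_h` (`yxx`) and `s'_h` (`xxy`), for `p = pOf n` and `q = qOf n`. -/
inductive IsCodeword (p q : ℕ) : List Bool → Prop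
  | yxx {y x x' : List Bool} : y.length = q → x.length = q - 1 → x'.length = q - 1 → x ≠ x' →
      IsCodeword p q (block3 p y x x')
  | xxy {x x' y : List Bool} : x.length = q - 1 → x'.length = q - 1 → y.length = q →
      y[q - 1]? = some false → IsCodeword p q (block3 p x x' y)

namespace IsCodeword

variable {p q d : ℕ} {u v : List Bool}

theorem exists_windowLengths (h : IsCodeword p q u) :
    ∃ w₁ w₂ w₃, u = block3 p w₁ w₂ w₃ ∧ WindowLengths q w₁ w₂ w₃ := by
  rcases h with ⟨hy, hx, hx', -⟩ | ⟨hx, hx', hy, -⟩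
  exacts [⟨_, _, _, rfl, hx, Or.inl ⟨hy, hx'⟩⟩, ⟨_, _, _, rfl, hx', Or.inr ⟨hx, hy⟩⟩]

theorem length_eq (hp : 0 < p) (hq : 0 < q) (h : IsCodeword p q u) :
    u.length = 6 * p + 3 * q - 2 := by
  obtain ⟨w₁, w₂, w₃, rfl, hw₂, hw₁₃⟩ := h.exists_windowLengths
  rw [block3_length hp]; omega

theorem not_drop_prefix (hq : 2 ≤ q) (hqp : q ≤ p) (hu : IsCodeword p q u)
    (hv : IsCodeword p q v) (hd₀ : 0 < d) (hd : d ≤ 2 * p + q - 1) : ¬u.drop d <+: v := by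
  intro hpre
  obtain ⟨v₁, v₂, v₃, rfl, hvw⟩ := hv.exists_windowLengths
  rcases hu with ⟨hy, hx, hx', hne⟩ | ⟨hx, hx', hy, hy₀⟩
  · obtain ⟨f, -, h₂, h₃⟩ :=
      exists_indicator_of_drop_prefix hq hqp ⟨hx, Or.inl ⟨hy, hx'⟩⟩ hvw hd₀ hd hpre
    refine hne (ext_getElem? fun t => ?_)
    rcases lt_or_ge t (q - 1) with ht | ht
    · rw [h₂ t (by omega), h₃ t (by omega)]
    · rw [getElem?_eq_none (by omega), getElem?_eq_none (by omega)]
  · obtain ⟨f, hf, -, h₃⟩ :=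
      exists_indicator_of_drop_prefix hq hqp ⟨hx', Or.inr ⟨hx, hy⟩⟩ hvw hd₀ hd hpre
    rw [h₃ _ (by omega)] at hy₀
    simp only [Option.some.injEq, bne_eq_false_iff_eq] at hy₀
    omega

theorem ovLen_le (hq : 2 ≤ q) (hqp : q ≤ p) (hu : IsCodeword p q u) (hv : IsCodeword p q v)
    (huv : u ≠ v) : ovLen u v ≤ 2 * (2 * p + q - 1) := by
  refine _root_.ovLen_le fun l hl hlv heq => ?_
  have hu_len := hu.length_eq (by omega) (by omega)
  have hv_len := hv.length_eq (by omega) (by omega)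
  have hpre : u.drop (u.length - l) <+: v := heq ▸ take_prefix l v
  rcases Nat.eq_zero_or_pos (u.length - l) with h₀ | h₀
  · rw [h₀, drop_zero] at hpre
    exact huv (hpre.eq_of_length (by omega))
  · exact hu.not_drop_prefix hq hqp hv h₀ (by omega) hpre

end IsCodeword

theorem two_mul_pOf_add_qOf {n : ℕ} (hn : 3 ≤ n) : 2 * pOf n + qOf n = n - 1 := by
  simp only [pOf, qOf]; omega

theorem qOf_le_pOf (n : ℕ) : qOf n ≤ pOf n := by
  simp only [pOf, qOf]; omega

theorem twenty_le_qOf {n : ℕ} (hn : 64 ≤ n) : 20 ≤ qOf n := by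
  simp only [pOf, qOf]; omega

theorem lt_two_pow_qOf_sub_one {n : ℕ} (hn : 64 ≤ n) : n < 2 ^ (qOf n - 1) := by
  have hq : 20 ≤ qOf n ∧ n ≤ 3 * qOf n + 5 := by simp only [pOf, qOf]; omega
  have hpow : 2 ^ (qOf n - 1) = 4 * 2 ^ (qOf n - 3) := by
    rw [show qOf n - 1 = 2 + (qOf n - 3) by omega, pow_add]; rfl
  have := Nat.lt_two_pow_self (n := qOf n - 3)
  omega

theorem length_binEnc (r i : ℕ) : (binEnc r i).length = r := by
  simp [binEnc]

theorem binEnc_inj {r a b : ℕ} (ha : a < 2 ^ r) (hb : b < 2 ^ r)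
    (h : binEnc r a = binEnc r b) : a = b := by
  refine Nat.eq_of_testBit_eq fun t => ?_
  rcases lt_or_ge t r with ht | ht
  · have := congrArg (·[r - 1 - t]?) h
    simpa [binEnc, show r - 1 - t < r by omega, show r - 1 - (r - 1 - t) = t by omega] using this
  · rw [Nat.testBit_lt_two_pow (ha.trans_le (Nat.pow_le_pow_right two_pos ht)),
      Nat.testBit_lt_two_pow (hb.trans_le (Nat.pow_le_pow_right two_pos ht))]

theorem xEnc_inj {n i j : ℕ} (hn : 64 ≤ n) (hi : i ≤ n) (hj : j ≤ n)
    (h : xEnc n i = xEnc n j) : i = j :=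
  have := lt_two_pow_qOf_sub_one hn
  binEnc_inj (by omega) (by omega) h

theorem getElem?_yEnc_last {n : ℕ} (hq : 0 < qOf n) (h : ℕ) :
    (yEnc n h)[qOf n - 1]? = some false := by
  simp [yEnc, binEnc, hq, Nat.testBit_zero]

theorem sh_eq_block3 (n i j h : ℕ) :
    sh n i j h = block3 (pOf n) (yEnc n h) (xEnc n i) (xEnc n j) := by
  simp [sh, block3, block, zStr, zStar]

theorem sh'_eq_block3 (n i j h : ℕ) :
    sh' n i j h = block3 (pOf n) (xEnc n i) (xEnc n j) (yEnc n h) := by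
  simp [sh', block3, block, zStr, zStar]

def LooplessArcs (n m : ℕ) (E : ℕ → ℕ × ℕ) : Prop :=
  ∀ h < m, (E h).1 ≤ n ∧ (E h).2 ≤ n ∧ (E h).1 ≠ (E h).2

section Construction

variable {n m : ℕ} {E : ℕ → ℕ × ℕ}

theorem isCodeword_sh (hn : 64 ≤ n) {i j : ℕ} (hi : i ≤ n) (hj : j ≤ n) (hij : i ≠ j) (h : ℕ) :
    IsCodeword (pOf n) (qOf n) (sh n i j h) := by
  rw [sh_eq_block3]
  exact .yxx (length_binEnc _ _) (length_binEnc _ _) (length_binEnc _ _)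
    fun e => hij (xEnc_inj hn hi hj e)

theorem isCodeword_sh' (hn : 64 ≤ n) (i j h : ℕ) : IsCodeword (pOf n) (qOf n) (sh' n i j h) := by
  rw [sh'_eq_block3]
  exact .xxy (length_binEnc _ _) (length_binEnc _ _) (length_binEnc _ _)
    (getElem?_yEnc_last (by have := twenty_le_qOf hn; omega) h)

theorem sh_ne_sh' (hn : 64 ≤ n) (i j h i' j' h' : ℕ) : sh n i j h ≠ sh' n i' j' h' := by
  have hq := twenty_le_qOf hn
  have hqp := qOf_le_pOf n
  have hp : 0 < pOf n := by omega
  intro e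
  have := congrArg (·[2 * pOf n + qOf n]?) e
  simp only [sh_eq_block3, sh'_eq_block3] at this
  rw [getElem?_block3_eq_false hp (by simp [yEnc, length_binEnc]),
    getElem?_block3_eq_true hp (by simp only [xEnc, yEnc, block3_length hp, length_binEnc]; omega)
      (by simp only [MaybeFalse, xEnc, yEnc, length_binEnc]; omega)] at this
  cases this

theorem eq_of_sh_eq (hn : 64 ≤ n) {i j h i' j' h' : ℕ} (hi : i ≤ n) (hj : j ≤ n) (hi' : i' ≤ n)
    (hj' : j' ≤ n) (e : sh n i j h = sh n i' j' h') : i = i' ∧ j = j' := by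
  simp only [sh_eq_block3] at e
  obtain ⟨-, ei, ej⟩ := block3_injective (by simp [yEnc, length_binEnc])
    (by simp [xEnc, length_binEnc]) e
  exact ⟨xEnc_inj hn hi hi' ei, xEnc_inj hn hj hj' ej⟩

theorem eq_of_sh'_eq (hn : 64 ≤ n) {i j h i' j' h' : ℕ} (hi : i ≤ n) (hj : j ≤ n) (hi' : i' ≤ n)
    (hj' : j' ≤ n) (e : sh' n i j h = sh' n i' j' h') : i = i' ∧ j = j' := by
  simp only [sh'_eq_block3] at e
  obtain ⟨ei, ej, -⟩ := block3_injective (by simp [xEnc, length_binEnc])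
    (by simp [xEnc, length_binEnc]) e
  exact ⟨xEnc_inj hn hi hi' ei, xEnc_inj hn hj hj' ej⟩

theorem Sconstr_succ : Sconstr n (m + 1) E =
    Sconstr n m E ++ [sh n (E m).1 (E m).2 (m + 1), sh' n (E m).1 (E m).2 (m + 1)] := by
  simp [Sconstr, range_succ]

theorem length_Sconstr : (Sconstr n m E).length = 2 * m := by
  induction m with
  | zero => rfl
  | succ m ih => rw [Sconstr_succ, length_append, ih]; rfl

theorem getD_Sconstr {h : ℕ} (hh : h < m) :
    (Sconstr n m E).getD (2 * h) [] = sh n (E h).1 (E h).2 (h + 1) ∧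
      (Sconstr n m E).getD (2 * h + 1) [] = sh' n (E h).1 (E h).2 (h + 1) := by
  induction m with
  | zero => omega
  | succ m ih =>
    rw [Sconstr_succ]
    rcases Nat.lt_succ_iff_lt_or_eq.mp hh with hlt | rfl
    · rw [getD_append _ _ _ _ (by rw [length_Sconstr]; omega),
        getD_append _ _ _ _ (by rw [length_Sconstr]; omega)]
      exact ih hlt
    · simp [length_Sconstr]

theorem isCodeword_getD_Sconstr (hn : 64 ≤ n)
    (hE : LooplessArcs n m E) {k : ℕ} (hk : k < 2 * m) :
    IsCodeword (pOf n) (qOf n) ((Sconstr n m E).getD k []) := by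
  obtain ⟨h, rfl | rfl⟩ := Nat.even_or_odd' k
  · obtain ⟨hi, hj, hij⟩ := hE h (by omega)
    rw [(getD_Sconstr (by omega)).1]
    exact isCodeword_sh hn hi hj hij _
  · rw [(getD_Sconstr (by omega)).2]
    exact isCodeword_sh' hn _ _ _

theorem getD_Sconstr_inj (hn : 64 ≤ n)
    (hE : LooplessArcs n m E)
    (hinj : ∀ h < m, ∀ h' < m, E h = E h' → h = h')
    {k k' : ℕ} (hk : k < 2 * m) (hk' : k' < 2 * m)
    (e : (Sconstr n m E).getD k [] = (Sconstr n m E).getD k' []) : k = k' := by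
  obtain ⟨h, rfl | rfl⟩ := Nat.even_or_odd' k <;> obtain ⟨h', rfl | rfl⟩ := Nat.even_or_odd' k' <;>
    obtain ⟨hi, hj, -⟩ := hE h (by omega) <;> obtain ⟨hi', hj', -⟩ := hE h' (by omega) <;>
    simp only [getD_Sconstr (E := E) (n := n) (by omega : h < m),
      getD_Sconstr (E := E) (n := n) (by omega : h' < m)] at e
  · obtain ⟨e₁, e₂⟩ := eq_of_sh_eq hn hi hj hi' hj' e
    rw [hinj h (by omega) h' (by omega) (Prod.ext e₁ e₂)]
  · exact absurd e (sh_ne_sh' hn _ _ _ _ _ _)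
  · exact absurd e.symm (sh_ne_sh' hn _ _ _ _ _ _)
  · obtain ⟨e₁, e₂⟩ := eq_of_sh'_eq hn hi hj hi' hj' e
    rw [hinj h (by omega) h' (by omega) (Prod.ext e₁ e₂)]

theorem ovLen_getD_Sconstr_le (hn : 64 ≤ n)
    (hE : LooplessArcs n m E)
    (hinj : ∀ h < m, ∀ h' < m, E h = E h' → h = h')
    {k k' : ℕ} (hk : k < 2 * m) (hk' : k' < 2 * m) (hne : k ≠ k') :
    ovLen ((Sconstr n m E).getD k []) ((Sconstr n m E).getD k' []) ≤ 2 * (n - 2) := by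
  have := two_mul_pOf_add_qOf (by omega : 3 ≤ n)
  have := twenty_le_qOf hn
  calc _ ≤ 2 * (2 * pOf n + qOf n - 1) :=
        (isCodeword_getD_Sconstr hn hE hk).ovLen_le (by omega) (qOf_le_pOf n)
          (isCodeword_getD_Sconstr hn hE hk')
          fun e => hne (getD_Sconstr_inj hn hE hinj hk hk' e)
    _ = 2 * (n - 2) := by omega

theorem pairWeight_Sconstr_two_mul (hn : 64 ≤ n)
    (hE : LooplessArcs n m E) {h : ℕ} (hh : h < m) :
    pairWeight (Sconstr n m E) (2 * h, 2 * h + 1) = 2 * (n - 2) := by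
  obtain ⟨hi, hj, hij⟩ := hE h hh
  have hpq := two_mul_pOf_add_qOf (by omega : 3 ≤ n)
  have hq := twenty_le_qOf hn
  have hp : 0 < pOf n := by have := qOf_le_pOf n; omega
  have hs := isCodeword_sh hn hi hj hij (h + 1)
  have hs' := isCodeword_sh' hn (E h).1 (E h).2 (h + 1)
  have hne := sh_ne_sh' hn (E h).1 (E h).2 (h + 1) (E h).1 (E h).2 (h + 1)
  -- `s_h` ends with, and `s'_h` starts with, the two blocks `z x_i z*` and `z x_j z*`
  have hlow :
      2 * (n - 2) ≤ ovLen (sh n (E h).1 (E h).2 (h + 1)) (sh' n (E h).1 (E h).2 (h + 1)) := by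
    rw [sh_eq_block3, sh'_eq_block3, block3, block3, append_assoc]
    refine le_trans (le_of_eq ?_) (length_le_ovLen_append _ _ _)
    simp only [length_append, block_length hp, xEnc, length_binEnc]
    omega
  rw [pairWeight]
  dsimp only
  rw [(getD_Sconstr hh).1, (getD_Sconstr hh).2]
  refine le_antisymm (max_le ?_ ?_) (le_max_of_le_left hlow)
  · exact (hs.ovLen_le (by omega) (qOf_le_pOf n) hs' hne).trans (by omega)
  · exact (hs'.ovLen_le (by omega) (qOf_le_pOf n) hs hne.symm).trans (by omega)

theorem sum_pairWeight_Sconstr_le (hn : 64 ≤ n)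
    (hE : LooplessArcs n m E)
    (hinj : ∀ h < m, ∀ h' < m, E h = E h' → h = h') {M : Finset (ℕ × ℕ)}
    (hM : IsMatching (Sconstr n m E) M) :
    ∑ p ∈ M, pairWeight (Sconstr n m E) p ≤ 2 * (n - 2) * m := by
  have := hM.two_mul_sum_pairWeight_le fun k hk k' hk' hne =>
    ovLen_getD_Sconstr_le hn hE hinj (length_Sconstr ▸ hk) (length_Sconstr ▸ hk') hne
  rw [length_Sconstr, mul_assoc, mul_comm m] at this
  exact Nat.le_of_mul_le_mul_left this two_pos

theorem sum_pairWeight_Mconstr (hn : 64 ≤ n)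
    (hE : LooplessArcs n m E) :
    ∑ p ∈ Mconstr m, pairWeight (Sconstr n m E) p = 2 * (n - 2) * m := by
  rw [Mconstr, Finset.sum_image fun a _ b _ hab => by simp only [Prod.mk.injEq] at hab; omega,
    Finset.sum_congr rfl fun h hh => pairWeight_Sconstr_two_mul hn hE (Finset.mem_range.mp hh),
    Finset.sum_const, Finset.card_range, smul_eq_mul, mul_comm]

end Construction

theorem matching_is_maximum_general (n m : ℕ) (E : ℕ → ℕ × ℕ) (hn : 64 ≤ n)
    (harcs : ∀ h < m, 1 ≤ (E h).1 ∧ (E h).1 ≤ n ∧ 1 ≤ (E h).2 ∧ (E h).2 ≤ n ∧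
      (E h).1 ≠ (E h).2)
    (hinj : ∀ h < m, ∀ h' < m, E h = E h' → h = h') :
    IsMatching (Sconstr n m E) (Mconstr m) ∧
      (∑ p ∈ Mconstr m, pairWeight (Sconstr n m E) p) = 2 * (n - 2) * m ∧
      mu (Sconstr n m E) = 2 * (n - 2) * m := by
  have hE : LooplessArcs n m E := fun h hh =>
    let ⟨_, hi, _, hj, hij⟩ := harcs h hh
    ⟨hi, hj, hij⟩
  have hM := isMatching_Mconstr (S := Sconstr n m E) length_Sconstr.ge
  have hsum := sum_pairWeight_Mconstr hn hE
  refine ⟨hM, hsum, (mu_eq_of_forall_le hM fun M hM' => ?_).trans hsum⟩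
  exact hsum ▸ sum_pairWeight_Sconstr_le hn hE hinj hM'

/-- M = {{s_h, s'_h}} is a maximum weight matching in G(S) and
μ(S) = 2(n−2)m. -/
theorem matching_is_maximum (n m : ℕ) (E : ℕ → ℕ × ℕ) (hn : 64 ≤ n) (hm : 1 ≤ m)
    (harcs : ∀ h < m, 1 ≤ (E h).1 ∧ (E h).1 ≤ n ∧ 1 ≤ (E h).2 ∧ (E h).2 ≤ n ∧
      (E h).1 ≠ (E h).2)
    (hinj : ∀ h < m, ∀ h' < m, E h = E h' → h = h') :
    IsMatching (Sconstr n m E) (Mconstr m) ∧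
      (∑ p ∈ Mconstr m, pairWeight (Sconstr n m E) p) = 2 * (n - 2) * m ∧
      mu (Sconstr n m E) = 2 * (n - 2) * m :=
  matching_is_maximum_general n m E hn harcs hinj
end
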